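/- Let f : ℝ^d → ℝ be continuously differentiable with M-Lipschitz gradient and let u ∼ N(0, I_d). Then for every θ ∈ ℝ^d and every ν > 0, the Gaussian-smoothed gradient ∇f_ν(θ) = E[∇f(θ + νu)] satisfies ‖∇f_ν(θ) − ∇f(θ)‖ ≤ M·ν·√d. -/

import Mathlib

open MeasureTheory ProbabilityTheory Real
open scoped ENNReal NNReal RealInnerProductSpace

noncomputable section

/-- `ℝ^d` with the Euclidean structure. -/
abbrev Euc (d : ℕ) := EuclideanSpace ℝ (Fin d)

/-- Standard Gaussian measure `N(0, I_d)` on `ℝ^d`. -/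
def stdGaussian (d : ℕ) : Measure (Euc d) :=
  (Measure.pi fun _ : Fin d => gaussianReal 0 1).map
    (MeasurableEquiv.toLp 2 (Fin d → ℝ))

/-! Since `∇f` is `M`-Lipschitz, `‖∇f(θ + νu) − ∇f(θ)‖ ≤ Mν‖u‖` pointwise, so the bias is at most
`Mν 𝔼‖u‖`; by Jensen `𝔼‖u‖ ≤ √(𝔼‖u‖²)`, and `𝔼‖u‖² = d` because along each of the `d` vectors of
an orthonormal basis the coordinate of a standard Gaussian vector has unit variance. -/

theorem integral_le_sqrt_integral_sq {Ω : Type*} [MeasurableSpace Ω] {μ : Measure Ω}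
    [IsProbabilityMeasure μ] {X : Ω → ℝ} (hX : MemLp X 2 μ) :
    ∫ ω, X ω ∂μ ≤ √(∫ ω, X ω ^ 2 ∂μ) := by
  have hvar := variance_nonneg X μ
  rw [variance_eq_sub hX] at hvar
  refine (le_abs_self _).trans (Real.abs_le_sqrt ?_)
  simpa [Pi.pow_apply] using hvar

theorem LipschitzWith.norm_integral_comp_add_smul_sub_le {E F : Type*} [NormedAddCommGroup E]
    [NormedSpace ℝ E] [MeasurableSpace E] [NormedAddCommGroup F] [NormedSpace ℝ F]
    [CompleteSpace F] {μ : Measure E} [IsProbabilityMeasure μ] (hμ : Integrable id μ)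
    {g : E → F} {K : ℝ≥0} (hg : LipschitzWith K g) (θ : E) (ν : ℝ) :
    ‖∫ u, g (θ + ν • u) ∂μ - g θ‖ ≤ K * |ν| * ∫ u, ‖u‖ ∂μ := by
  have hdist : ∀ u, ‖g (θ + ν • u) - g θ‖ ≤ K * |ν| * ‖u‖ := fun u => by
    simpa [dist_eq_norm, norm_smul, mul_assoc] using hg.dist_le_mul (θ + ν • u) θ
  have hint : Integrable (fun u => g (θ + ν • u) - g θ) μ := by
    refine Integrable.mono' (hμ.norm.const_mul (K * |ν|)) ?_ (ae_of_all _ hdist)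
    exact (hg.continuous.comp_aestronglyMeasurable
      (aestronglyMeasurable_const.add (hμ.aestronglyMeasurable.const_smul ν))).sub
      aestronglyMeasurable_const
  calc ‖∫ u, g (θ + ν • u) ∂μ - g θ‖ = ‖∫ u, (g (θ + ν • u) - g θ) ∂μ‖ := by
        rw [integral_sub ((hint.add (integrable_const (g θ))).congr (ae_of_all _ fun u => by simp))
          (integrable_const _), integral_const, probReal_univ, one_smul]
    _ ≤ ∫ u, K * |ν| * ‖u‖ ∂μ :=
        norm_integral_le_of_norm_le (hμ.norm.const_mul _) (ae_of_all _ hdist)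
    _ = K * |ν| * ∫ u, ‖u‖ ∂μ := integral_const_mul _ _

section StdGaussian

variable (E : Type*) [NormedAddCommGroup E] [InnerProductSpace ℝ E] [FiniteDimensional ℝ E]
  [MeasurableSpace E] [BorelSpace E]

theorem integral_norm_sq_stdGaussian :
    ∫ x, ‖x‖ ^ 2 ∂(ProbabilityTheory.stdGaussian E) = Module.finrank ℝ E := by
  set b := stdOrthonormalBasis ℝ E
  have hcoord : ∀ i, ∫ x, ⟪b i, x⟫ ^ 2 ∂(ProbabilityTheory.stdGaussian E) = 1 := fun i => by
    have := variance_dual_stdGaussian (innerSL ℝ (b i))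
    rw [variance_of_integral_eq_zero (by fun_prop) (integral_strongDual_stdGaussian _),
      innerSL_apply_norm, b.norm_eq_one, one_pow] at this
    simpa using this
  simp_rw [← b.sum_sq_inner_right]
  rw [integral_finsetSum _ fun i _ => ?_]
  · simp [hcoord]
  · exact (IsGaussian.memLp_dual _ (innerSL ℝ (b i)) 2 (by simp)).integrable_sq

theorem integral_norm_stdGaussian_le :
    ∫ x, ‖x‖ ∂(ProbabilityTheory.stdGaussian E) ≤ √(Module.finrank ℝ E) := by
  simpa [integral_norm_sq_stdGaussian] using integral_le_sqrt_integral_sq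
    (IsGaussian.memLp_two_id (μ := ProbabilityTheory.stdGaussian E)).norm

end StdGaussian

theorem stdGaussian_eq (d : ℕ) : stdGaussian d = ProbabilityTheory.stdGaussian (Euc d) :=
  map_pi_eq_stdGaussian

theorem gaussian_smoothing_gradient_bias_general
    (d : ℕ) (M : ℝ) (hM : 0 < M)
    (f' : Euc d → Euc d)
    (hlip : ∀ θ θ' : Euc d, ‖f' θ - f' θ'‖ ≤ M * ‖θ - θ'‖)
    (θ : Euc d) (ν : ℝ) (hν : 0 < ν) :
    ‖(∫ u, f' (θ + ν • u) ∂(stdGaussian d)) - f' θ‖ ≤ M * ν * Real.sqrt d := by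
  have hf' : LipschitzWith ⟨M, hM.le⟩ f' :=
    LipschitzWith.of_dist_le_mul fun x y => by
      rw [dist_eq_norm, dist_eq_norm]; exact hlip x y
  rw [stdGaussian_eq]
  calc _ ≤ M * |ν| * ∫ u, ‖u‖ ∂(ProbabilityTheory.stdGaussian (Euc d)) :=
        hf'.norm_integral_comp_add_smul_sub_le IsGaussian.integrable_id θ ν
    _ ≤ M * ν * √d := by
        rw [abs_of_pos hν]
        gcongr
        simpa using integral_norm_stdGaussian_le (Euc d)

/-- bias of Gaussian smoothing.  If `f` is continuously differentiable
with `M`-Lipschitz gradient and `u ∼ N(0, I_d)`, then for every `θ` and `ν > 0` the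
Gaussian-smoothed gradient `∇f_ν(θ) = E[∇f(θ + νu)]` satisfies
`‖∇f_ν(θ) - ∇f(θ)‖ ≤ M ν √d`. -/
theorem gaussian_smoothing_gradient_bias
    (d : ℕ) (hd : 1 ≤ d) (M : ℝ) (hM : 0 < M)
    (f : Euc d → ℝ) (f' : Euc d → Euc d)
    (hgrad : ∀ θ, HasGradientAt f (f' θ) θ)
    (hcont : Continuous f')
    (hlip : ∀ θ θ' : Euc d, ‖f' θ - f' θ'‖ ≤ M * ‖θ - θ'‖)
    (θ : Euc d) (ν : ℝ) (hν : 0 < ν) :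
    ‖(∫ u, f' (θ + ν • u) ∂(stdGaussian d)) - f' θ‖ ≤ M * ν * Real.sqrt d :=
  gaussian_smoothing_gradient_bias_general d M hM f' hlip θ ν hν
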